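/- arXiv:math/0312506 — 4 statements merged into one kernel-verified Lean document; each statement's English description precedes it below -/
import Mathlib

section
/- For every prime power q = p^t and integers k ≥ 0, the sum over ℓ from 0 to t-1 of σ_q(p^ℓ · k) equals ((q-1)/(p-1)) · σ(k), where σ_q(m) denotes the sum of the digits of m in base q and σ(m) the sum of the digits of m in base p. -/
lemma sum_digits_add (q a b : ℕ) (hq : 1 < q) (h : a % q + b < q) :
    (Nat.digits q (a + b)).sum = (Nat.digits q a).sum + b := by
  rcases Nat.eq_zero_or_pos (a + b) with h0 | h0
  · have ha : a = 0 := by omega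
    have hb : b = 0 := by omega
    simp [ha, hb]
  · have hd := Nat.mod_add_div a q
    have heq : a + b = a % q + b + q * (a / q) := by omega
    have hmod : (a + b) % q = a % q + b := by
      rw [heq, Nat.add_mul_mod_self_left, Nat.mod_eq_of_lt h]
    have hdiv : (a + b) / q = a / q := by
      rw [heq, Nat.add_mul_div_left _ _ (by omega : 0 < q),
        Nat.div_eq_of_lt h, Nat.zero_add]
    rw [Nat.digits_def' hq h0, hmod, hdiv]
    rcases Nat.eq_zero_or_pos a with ha | ha
    · simp [ha] at *
    · rw [Nat.digits_def' hq ha]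
      simp [List.sum_cons]
      ring

lemma sum_digits_mul_base (q n : ℕ) (hq : 1 < q) :
    (Nat.digits q (q * n)).sum = (Nat.digits q n).sum := by
  rcases Nat.eq_zero_or_pos n with h | h
  · simp [h]
  · rw [Nat.digits_def' hq (by positivity)]
    simp [Nat.mul_div_cancel_left _ (by omega : 0 < q), Nat.mul_mod_right]

lemma geom_nat (p t : ℕ) (hp : 2 ≤ p) :
    (p - 1) * ∑ ℓ ∈ Finset.range t, p ^ ℓ = p ^ t - 1 := by
  induction t with
  | zero => simp
  | succ n ih =>
    rw [Finset.sum_range_succ, Nat.mul_add, ih, pow_succ]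
    have h1 : 1 ≤ p ^ n := Nat.one_le_pow _ _ (by omega)
    have h2 : (p - 1) * p ^ n = p * p ^ n - 1 * p ^ n := by rw [Nat.sub_mul]
    have h3 : p ^ n ≤ p * p ^ n := Nat.le_mul_of_pos_left _ (by omega)
    have h4 : p ^ n * p = p * p ^ n := by ring
    omega

/-- For a prime power `q = p^t` and `k ≥ 0`,
`∑_{ℓ=0}^{t-1} σ_q(p^ℓ k) = ((q-1)/(p-1)) · σ_p(k)`,
where `σ_b(m)` is the sum of the base-`b` digits of `m`. -/
theorem digit_sum_identity (p t k : ℕ) (hp : p.Prime) (ht : 1 ≤ t)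
    (q : ℕ) (hq : q = p ^ t) :
    ∑ ℓ ∈ Finset.range t, (Nat.digits q (p ^ ℓ * k)).sum =
      (q - 1) / (p - 1) * (Nat.digits p k).sum := by
  have hp2 : 2 ≤ p := hp.two_le
  have hq1 : 1 < q := by
    rw [hq]; calc 1 < p := by omega
    _ ≤ p ^ t := Nat.le_self_pow (by omega) _
  have hc : (q - 1) / (p - 1) = ∑ ℓ ∈ Finset.range t, p ^ ℓ := by
    rw [hq, ← geom_nat p t hp2, Nat.mul_div_cancel_left _ (by omega)]
  rw [hc]
  induction k using Nat.strong_induction_on with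
  | _ k ih =>
  rcases Nat.eq_zero_or_pos k with h0 | h0
  · simp [h0]
  · have hk := Nat.div_add_mod k p
    -- Step A
    have stepA : ∀ ℓ ∈ Finset.range t,
        (Nat.digits q (p ^ ℓ * k)).sum =
        (Nat.digits q (p ^ (ℓ + 1) * (k / p))).sum + p ^ ℓ * (k % p) := by
      intro ℓ hℓ
      rw [Finset.mem_range] at hℓ
      have hsplit : p ^ ℓ * k = p ^ (ℓ + 1) * (k / p) + p ^ ℓ * (k % p) := by
        calc p ^ ℓ * k = p ^ ℓ * (p * (k / p) + k % p) := by rw [hk]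
        _ = p ^ (ℓ + 1) * (k / p) + p ^ ℓ * (k % p) := by ring
      set a := p ^ (ℓ + 1) * (k / p)
      set b := p ^ ℓ * (k % p)
      have hdvdq : p ^ (ℓ + 1) ∣ q := by rw [hq]; exact pow_dvd_pow p (by omega)
      have hdvda : p ^ (ℓ + 1) ∣ a % q :=
        (Nat.dvd_mod_iff hdvdq).2 (Dvd.intro _ rfl)
      have hlt : a % q < q := Nat.mod_lt _ (by omega)
      have hdvdsub : p ^ (ℓ + 1) ∣ q - a % q := Nat.dvd_sub hdvdq hdvda
      have hge : p ^ (ℓ + 1) ≤ q - a % q :=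
        Nat.le_of_dvd (Nat.sub_pos_of_lt hlt) hdvdsub
      have hble : b ≤ p ^ ℓ * (p - 1) := Nat.mul_le_mul_left _ (by have := Nat.mod_lt k (show 0 < p by omega); omega)
      have hpl : p ^ ℓ * (p - 1) + p ^ ℓ = p ^ (ℓ + 1) := by
        rw [Nat.mul_sub, pow_succ, Nat.mul_one]
        have : p ^ ℓ ≤ p ^ ℓ * p := Nat.le_mul_of_pos_right _ (by omega)
        omega
      have hqeq : q - a % q + a % q = q := Nat.sub_add_cancel (le_of_lt hlt)
      have hppos : 1 ≤ p ^ ℓ := Nat.one_le_pow _ _ (by omega)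
      have hcarry : a % q + b < q := by omega
      rw [hsplit, sum_digits_add q a b hq1 hcarry]
    rw [Finset.sum_congr rfl stepA, Finset.sum_add_distrib, ← Finset.sum_mul]
    -- Step B
    have stepB : ∑ ℓ ∈ Finset.range t, (Nat.digits q (p ^ (ℓ + 1) * (k / p))).sum
        = ∑ ℓ ∈ Finset.range t, (Nat.digits q (p ^ ℓ * (k / p))).sum := by
      have h1 := Finset.sum_range_succ' (fun ℓ => (Nat.digits q (p ^ ℓ * (k / p))).sum) t
      have h2 := Finset.sum_range_succ (fun ℓ => (Nat.digits q (p ^ ℓ * (k / p))).sum) t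
      have h3 : (Nat.digits q (p ^ t * (k / p))).sum
          = (Nat.digits q (p ^ 0 * (k / p))).sum := by
        rw [← hq, pow_zero, one_mul]
        exact sum_digits_mul_base q _ hq1
      simp only [pow_zero, one_mul] at h1 h3
      omega
    rw [stepB, ih (k / p) (Nat.div_lt_self h0 (by omega))]
    -- Step D
    have hdig : Nat.digits p k = k % p :: Nat.digits p (k / p) :=
      Nat.digits_def' (by omega) h0
    rw [hdig, List.sum_cons]
    ring
end

section
/- Let V = 𝔽_q^{n+1} and let 𝓛_1 be the set of 1-dimensional subspaces of V. The set of monomial functions {∏_{i=0}^n x_i^{b_i} : 0 ≤ b_i < q, Σ_i b_i ≡ 0 (mod q−1), (b_0,…,b_n) ≠ (q−1,…,q−1)} is a basis of the 𝔽_q-vector space of functions from 𝓛_1 to 𝔽_q. -/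
/-- The subspace of functions on the nonzero vectors of `V` that are invariant
under scalar multiplication by `Kˣ`; these are exactly the functions that
descend to the set `𝓛₁` of projective points of `PG(V)`. -/
def scalingInvariant (K V : Type*) [Field K] [AddCommGroup V] [Module K V] :
    Submodule K ({ v : V // v ≠ 0 } → K) where
  carrier := {f | ∀ (c : Kˣ) (v : { v : V // v ≠ 0 }),
    f ⟨c.1 • v.1, smul_ne_zero c.ne_zero v.2⟩ = f v}
  add_mem' hf hg c v := by simp [hf c v, hg c v]
  zero_mem' _ _ := rfl
  smul_mem' a f hf c v := by simp [hf c v]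

universe u

section helpers

open Finset MvPolynomial



private lemma eq_zero_of_eval_eq_zero' {K : Type u} [Field K] [Fintype K] {m : ℕ}
    (p : MvPolynomial (Fin m) K) (h : ∀ v : Fin m → K, eval v p = 0)
    (hp : p ∈ restrictDegree (Fin m) K (Fintype.card K - 1)) : p = 0 := by
  classical
  let e : ULift.{u} (Fin m) ≃ Fin m := Equiv.ulift
  have h1 : ∀ v : ULift.{u} (Fin m) → K, eval v (rename ⇑e.symm p) = 0 := by
    intro v
    rw [eval_rename]
    exact h _
  have h2 : rename ⇑e.symm p ∈ restrictDegree (ULift.{u} (Fin m)) K (Fintype.card K - 1) := by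
    rw [mem_restrictDegree _ _ _]
    intro s hs i
    rw [support_rename_of_injective e.symm.injective] at hs
    obtain ⟨t, ht, rfl⟩ := Finset.mem_image.mp hs
    obtain ⟨j, rfl⟩ := e.symm.surjective i
    rw [Finsupp.mapDomain_apply e.symm.injective]
    exact (mem_restrictDegree _ p _).mp hp t ht j
  have h3 : rename ⇑e.symm p = 0 := eq_zero_of_eval_eq_zero _ _ _ h1 h2
  have := rename_injective (R := K) ⇑e.symm e.symm.injective
  apply this
  rw [h3, map_zero]


variable {K : Type*} [Field K] [Fintype K] {n : ℕ}

private def Fam (K : Type*) [Field K] [Fintype K] (n : ℕ)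
    (b : {b : Fin (n + 1) → ℕ // (∀ i, b i < Fintype.card K) ∧
        (Fintype.card K - 1) ∣ (∑ i, b i) ∧ b ≠ fun _ => Fintype.card K - 1})
    (v : { v : Fin (n + 1) → K // v ≠ 0 }) : K :=
  ∏ i, (v.1 i) ^ (b.1 i)

private lemma vanish_rel (v : Fin (n + 1) → K) (hv : v ≠ 0) :
    ∑ S ∈ (Finset.univ : Finset (Fin (n + 1))).powerset,
      (-1 : K) ^ S.card * ∏ i ∈ S, v i ^ (Fintype.card K - 1) = 0 := by
  have h2 : ∏ i : Fin (n + 1), (-(v i ^ (Fintype.card K - 1)) + 1) = 0 := by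
    obtain ⟨i, hi⟩ := Function.ne_iff.mp hv
    refine Finset.prod_eq_zero (Finset.mem_univ i) ?_
    rw [FiniteField.pow_card_sub_one_eq_one _ hi]
    ring
  rw [Finset.prod_add] at h2
  rw [← h2]
  refine Finset.sum_congr rfl fun S _ => ?_
  rw [Finset.prod_const_one, mul_one]
  have : ∀ i ∈ S, -(v i ^ (Fintype.card K - 1)) = (-1) * (v i ^ (Fintype.card K - 1)) := by
    intros; ring
  rw [Finset.prod_congr rfl this, Finset.prod_mul_distrib, Finset.prod_const]

private lemma mem_span_of_le (d : Fin (n + 1) → ℕ)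
    (hle : ∀ i, d i ≤ Fintype.card K - 1) (hdvd : (Fintype.card K - 1) ∣ ∑ i, d i) :
    (fun v : { v : Fin (n + 1) → K // v ≠ 0 } => ∏ i, (v.1 i) ^ (d i)) ∈
      Submodule.span K (Set.range (Fam K n)) := by
  have hq : 1 < Fintype.card K := Fintype.one_lt_card
  by_cases hd : d = fun _ => Fintype.card K - 1
  · subst hd
    have key : (fun v : { v : Fin (n + 1) → K // v ≠ 0 } =>
          ∏ i, (v.1 i) ^ (Fintype.card K - 1)) =
        ∑ S ∈ ((Finset.univ : Finset (Fin (n + 1))).powerset.erase Finset.univ),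
          ((-1 : K) ^ (n + S.card)) •
            (fun v : { v : Fin (n + 1) → K // v ≠ 0 } =>
              ∏ i ∈ S, (v.1 i) ^ (Fintype.card K - 1)) := by
      funext v
      have h := vanish_rel v.1 v.2
      rw [← Finset.add_sum_erase _ _
        (Finset.mem_powerset_self (Finset.univ : Finset (Fin (n + 1))))] at h
      simp only [Finset.card_univ, Fintype.card_fin] at h
      set M := ∏ i, (v.1 i) ^ (Fintype.card K - 1) with hM
      set T := ∑ S ∈ ((Finset.univ : Finset (Fin (n + 1))).powerset.erase Finset.univ),
          (-1 : K) ^ S.card * ∏ i ∈ S, v.1 i ^ (Fintype.card K - 1) with hT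
      obtain ⟨e, he⟩ : ∃ e : K, (-1 : K) ^ n = e := ⟨_, rfl⟩
      have hee : e * e = 1 := by
        rw [← he, ← pow_add, ← two_mul, pow_mul, neg_one_sq, one_pow]
      rw [pow_succ, he] at h
      have hrhs : (∑ S ∈ ((Finset.univ : Finset (Fin (n + 1))).powerset.erase Finset.univ),
          ((-1 : K) ^ (n + S.card)) •
            (fun v : { v : Fin (n + 1) → K // v ≠ 0 } =>
              ∏ i ∈ S, (v.1 i) ^ (Fintype.card K - 1))) v = e * T := by
        rw [hT, Finset.sum_apply, Finset.mul_sum]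
        refine Finset.sum_congr rfl fun S _ => ?_
        simp only [Pi.smul_apply, smul_eq_mul, pow_add, he]
        ring
      rw [hrhs]
      show M = e * T
      linear_combination (-e) * h - M * hee
    rw [key]
    refine Submodule.sum_mem _ fun S hS => Submodule.smul_mem _ _ ?_
    have hSne : S ≠ Finset.univ := (Finset.mem_erase.mp hS).1
    obtain ⟨j, hj⟩ : ∃ j, j ∉ S := by
      by_contra hc
      push_neg at hc
      exact hSne (Finset.eq_univ_iff_forall.mpr hc)
    classical
    have heq : (fun v : { v : Fin (n + 1) → K // v ≠ 0 } =>
        ∏ i ∈ S, (v.1 i) ^ (Fintype.card K - 1)) =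
        Fam K n ⟨fun i => if i ∈ S then Fintype.card K - 1 else 0,
          ⟨fun i => by dsimp only; split <;> omega,
           ⟨S.card, by
              rw [Finset.sum_ite_mem, Finset.univ_inter, Finset.sum_const, smul_eq_mul,
                mul_comm]⟩,
           by
            intro hcon
            have h2 := congrFun hcon j
            simp only [if_neg hj] at h2
            omega⟩⟩ := by
      funext v
      simp only [Fam]
      have hpt : ∀ x : Fin (n + 1),
          (v.1 x) ^ (if x ∈ S then Fintype.card K - 1 else 0) =
            if x ∈ S then (v.1 x) ^ (Fintype.card K - 1) else 1 := fun x => by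
        split <;> simp
      rw [Finset.prod_congr rfl fun x _ => hpt x, Finset.prod_ite_mem, Finset.univ_inter]
    rw [heq]
    exact Submodule.subset_span ⟨_, rfl⟩
  · exact Submodule.subset_span
      ⟨⟨d, fun i => lt_of_le_of_lt (hle i) (by omega), hdvd, hd⟩, rfl⟩

end helpers

open Finset MvPolynomial in
/-- The monomials `∏ x_i^{b_i}` with `0 ≤ b_i < q`, total degree divisible by
`q - 1`, and `(b_0, …, b_n) ≠ (q-1, …, q-1)` form a basis of the space of
functions from the projective points `𝓛₁` of `PG(n, q)` to `𝔽_q`: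
they are linearly independent and they span exactly the scaling-invariant
functions on `V ∖ {0}`. -/
theorem monomial_basis_projective (K : Type*) [Field K] [Fintype K] (n : ℕ) :
    LinearIndependent K
      (fun (b : {b : Fin (n + 1) → ℕ // (∀ i, b i < Fintype.card K) ∧
          (Fintype.card K - 1) ∣ (∑ i, b i) ∧ b ≠ fun _ => Fintype.card K - 1})
        (v : { v : Fin (n + 1) → K // v ≠ 0 }) => ∏ i, (v.1 i) ^ (b.1 i)) ∧
    Submodule.span K (Set.range
      (fun (b : {b : Fin (n + 1) → ℕ // (∀ i, b i < Fintype.card K) ∧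
          (Fintype.card K - 1) ∣ (∑ i, b i) ∧ b ≠ fun _ => Fintype.card K - 1})
        (v : { v : Fin (n + 1) → K // v ≠ 0 }) => ∏ i, (v.1 i) ^ (b.1 i))) =
      scalingInvariant K (Fin (n + 1) → K) := by
  classical
  constructor
  · rw [linearIndependent_iff]
    intro l hl
    classical
    have hq : 1 < Fintype.card K := Fintype.one_lt_card
    set P : MvPolynomial (Fin (n + 1)) K :=
      ∑ b ∈ l.support, C (l b) * ∏ i, X i ^ (b.1 i) with hP
    have hevalP : ∀ w : Fin (n + 1) → K,
        eval w P = ∑ b ∈ l.support, l b * ∏ i, w i ^ (b.1 i) := by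
      intro w
      rw [hP, map_sum]
      refine Finset.sum_congr rfl fun b _ => ?_
      simp [eval_C, eval_X]
    have h1 : ∀ w : Fin (n + 1) → K, w ≠ 0 → eval w P = 0 := by
      intro w hw
      have h := congrFun hl ⟨w, hw⟩
      rw [Finsupp.linearCombination_apply, Finsupp.sum] at h
      rw [hevalP]
      simpa [Finset.sum_apply] using h
    have h0 : eval (0 : Fin (n + 1) → K) P = 0 := by
      have hsum1 : ∑ w : Fin (n + 1) → K, eval w P = eval 0 P := by
        refine Finset.sum_eq_single_of_mem 0 (Finset.mem_univ _) fun w _ hw => h1 w hw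
      have hsum2 : ∑ w : Fin (n + 1) → K, eval w P = 0 := by
        have : ∀ w : Fin (n + 1) → K, eval w P = ∑ b ∈ l.support, l b * ∏ i, w i ^ (b.1 i) :=
          hevalP
        simp only [this]
        rw [Finset.sum_comm]
        refine Finset.sum_eq_zero fun b _ => ?_
        rw [← Finset.mul_sum]
        have : ∑ w : Fin (n + 1) → K, ∏ i, w i ^ (b.1 i)
            = ∏ i, ∑ x : K, x ^ (b.1 i) := by
          rw [Finset.prod_univ_sum]
          rw [Fintype.piFinset_univ]
        rw [this]
        obtain ⟨i, hi⟩ := Function.ne_iff.mp b.2.2.2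
        have hilt : b.1 i < Fintype.card K - 1 := by have := b.2.1 i; omega
        rw [Finset.prod_eq_zero (Finset.mem_univ i)
          (FiniteField.sum_pow_lt_card_sub_one K _ hilt), mul_zero]
      rw [← hsum1, hsum2]
    have hPall : ∀ w : Fin (n + 1) → K, eval w P = 0 := by
      intro w
      by_cases hw : w = 0
      · subst hw; exact h0
      · exact h1 w hw
    have hmono : ∀ b : Fin (n + 1) → ℕ,
        (∏ i, X i ^ (b i) : MvPolynomial (Fin (n + 1)) K)
          = monomial (Finsupp.equivFunOnFinite.symm b) 1 := by
      intro b
      rw [← prod_X_pow_eq_monomial]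
      refine (Finset.prod_subset (Finset.subset_univ _) fun i _ hi => ?_).symm
      have hz : b i = 0 := Finsupp.notMem_support_iff.mp hi
      rw [hz, pow_zero]
    have hPm : P = ∑ b ∈ l.support, monomial (Finsupp.equivFunOnFinite.symm b.1) (l b) := by
      rw [hP]
      refine Finset.sum_congr rfl fun b _ => ?_
      rw [hmono, C_mul_monomial, mul_one]
    have hPmem : P ∈ restrictDegree (Fin (n + 1)) K (Fintype.card K - 1) := by
      rw [hPm]
      refine Submodule.sum_mem _ fun b _ => ?_
      rw [mem_restrictDegree _ _ _]
      intro s hs i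
      have hs' := MvPolynomial.support_monomial_subset hs
      rw [Finset.mem_singleton] at hs'
      subst hs'
      have := b.2.1 i
      show b.1 i ≤ _
      omega
    have hP0 : P = 0 := eq_zero_of_eval_eq_zero' P hPall hPmem
    ext b
    by_cases hb : b ∈ l.support
    · have : coeff (Finsupp.equivFunOnFinite.symm b.1) P = l b := by
        rw [hPm, MvPolynomial.coeff_sum]
        rw [Finset.sum_eq_single_of_mem b hb]
        · rw [coeff_monomial, if_pos rfl]
        · intro b' _ hbb
          rw [coeff_monomial, if_neg]
          intro hcon
          exact hbb (Subtype.ext (Finsupp.equivFunOnFinite.symm.injective hcon))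
      rw [hP0] at this
      simp only [coeff_zero] at this
      simp [← this]
    · simpa using Finsupp.notMem_support_iff.mp hb
  · show Submodule.span K (Set.range (Fam K n)) = scalingInvariant K (Fin (n + 1) → K)
    classical
    apply le_antisymm
    · rw [Submodule.span_le]
      rintro _ ⟨b, rfl⟩
      intro c v
      show ∏ i, (c.1 • v.1) i ^ (b.1 i) = ∏ i, (v.1 i) ^ (b.1 i)
      simp only [Pi.smul_apply, smul_eq_mul, mul_pow, Finset.prod_mul_distrib,
        Finset.prod_pow_eq_pow_sum]
      obtain ⟨k, hk⟩ := b.2.2.1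
      rw [hk, pow_mul, FiniteField.pow_card_sub_one_eq_one _ c.ne_zero, one_pow, one_mul]
    · intro f hf
      have hf' : ∀ (c : Kˣ) (v : { v : Fin (n + 1) → K // v ≠ 0 }),
          f ⟨c.1 • v.1, smul_ne_zero c.ne_zero v.2⟩ = f v := hf
      set g : (Fin (n + 1) → K) → K := fun w => if h : w = 0 then 0 else f ⟨w, h⟩ with hg
      obtain ⟨p, hp, hpe⟩ : ∃ p ∈ restrictDegree (Fin (n + 1)) K (Fintype.card K - 1),
          ∀ w, eval w p = g w := by
        have h := MvPolynomial.map_restrict_dom_evalₗ K (Fin (n + 1))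
        have hg' : g ∈ Submodule.map (evalₗ K (Fin (n + 1)))
            (restrictDegree (Fin (n + 1)) K (Fintype.card K - 1)) := by
          rw [h]; trivial
        obtain ⟨p, hp2, hpg⟩ := hg'
        exact ⟨p, hp2, fun w => congrFun hpg w⟩
      have hkey : f = ∑ d ∈ p.support,
          (coeff d p * (-∑ c : Kˣ, (c.1 : K) ^ (∑ i, d i))) •
            (fun v : { v : Fin (n + 1) → K // v ≠ 0 } => ∏ i, (v.1 i) ^ (d i)) := by
        funext v
        rw [Finset.sum_apply]
        simp only [Pi.smul_apply, smul_eq_mul]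
        have hvc : ∀ c : Kˣ, eval (c.1 • v.1) p
            = ∑ d ∈ p.support, coeff d p * ((c.1 : K) ^ (∑ i, d i) * ∏ i, (v.1 i) ^ (d i)) := by
          intro c
          rw [eval_eq']
          refine Finset.sum_congr rfl fun d _ => ?_
          congr 1
          rw [← Finset.prod_pow_eq_pow_sum, ← Finset.prod_mul_distrib]
          refine Finset.prod_congr rfl fun i _ => ?_
          rw [Pi.smul_apply, smul_eq_mul, mul_pow]
        have hl : f v = -∑ c : Kˣ, eval (c.1 • v.1) p := by
          have hc : ∀ c : Kˣ, eval (c.1 • v.1) p = f v := by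
            intro c
            rw [hpe]
            simp only [hg, dif_neg (smul_ne_zero c.ne_zero v.2)]
            exact hf' c v
          rw [Finset.sum_congr rfl fun c _ => hc c, Finset.sum_const, Finset.card_univ,
            Fintype.card_units, nsmul_eq_mul,
            Nat.cast_sub (le_of_lt Fintype.one_lt_card), Nat.cast_one,
            FiniteField.cast_card_eq_zero, zero_sub, neg_mul, one_mul, neg_neg]
        rw [hl, Finset.sum_congr rfl fun c _ => hvc c, Finset.sum_comm,
          ← Finset.sum_neg_distrib]
        refine Finset.sum_congr rfl fun d _ => ?_
        rw [← Finset.mul_sum, ← Finset.sum_mul]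
        ring
      rw [hkey]
      refine Submodule.sum_mem _ fun d hd => ?_
      by_cases hdvd : (Fintype.card K - 1) ∣ ∑ i, d i
      · refine Submodule.smul_mem _ _ (mem_span_of_le _ (fun i => ?_) hdvd)
        exact (mem_restrictDegree _ p _).mp hp d hd i
      · have h0 : (∑ c : Kˣ, (c.1 : K) ^ (∑ i, d i)) = 0 := by
          have h := FiniteField.sum_pow_units K (∑ i, d i)
          rw [if_neg hdvd] at h
          simpa using h
        rw [h0, neg_zero, mul_zero, zero_smul]
        exact Submodule.zero_mem _
end

section
/- Let ℋ be the set of t-tuples (s_0,…,s_{t−1}) of integers with 1 ≤ s_j ≤ n and 0 ≤ p·s_{j+1} − s_j ≤ (p−1)(n+1) for all j (subscripts mod t). For every nonconstant monomial exponent tuple (b_0,…,b_n) with 0 ≤ b_i ≤ q−1, Σ_i b_i ≡ 0 (mod q−1), and (b_0,…,b_n) ≠ (q−1,…,q−1), there is a unique tuple (s_0,…,s_{t−1}) ∈ ℋ with λ_j = p·s_{j+1} − s_j for all j, where λ_j = Σ_{i=0}^n a_{i,j} and b_i = Σ_j p^j a_{i,j} is the base-p expansion; explicitly s_j = (1/(q−1))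 Σ_{i=0}^n ( Σ_{ℓ=0}^{j−1} p^{ℓ+t−j} a_{i,ℓ} + Σ_{ℓ=j}^{t−1} p^{ℓ−j} a_{i,ℓ} ). -/
/-!
Write `Q = p^t - 1` and `λ` for the digit sums. Any solution of the cyclic system
`p s_{j+1} - s_j = λ_j` satisfies `Q s_j = c_j := ∑_{m<t} p^m λ_{j+m}`, because the difference
`x` of the two sides solves the homogeneous system, so `x_j = p^t x_j`. Conversely `c_j / Q` is
an integral solution: `c_0 = ∑ b_i` is divisible by `Q`, and `p c_{j+1} ≡ c_j (mod Q)` with `p` a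
unit mod `Q`. Since `0 ≤ λ_j ≤ (p-1)(n+1)`, with neither bound attained for all `j` (as
`b ≠ 0` and `b ≠ q - 1`), `c_j > 0`; applied also to the solution `(n+1) - s` of the complementary
system this gives `1 ≤ s_j ≤ n`.
-/

/-- `s ∈ ℋ` (conditions `1 ≤ s_j ≤ n`, `0 ≤ p s_{j+1} - s_j ≤ (p-1)(n+1)`,
indices mod `t`) together with `p s_{j+1} - s_j = λ_j(b)` for all `j`,
where `λ_j(b) = ∑_i a_{i,j}` is the sum of the `j`-th base-`p` digits of the
exponents `b_i`. -/
def TypeCond (p t n : ℕ) [NeZero t] (b : Fin (n + 1) → ℕ) (s : Fin t → ℤ) : Prop :=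
  (∀ j : Fin t, 1 ≤ s j ∧ s j ≤ (n : ℤ) ∧
      0 ≤ (p : ℤ) * s (j + 1) - s j ∧
      (p : ℤ) * s (j + 1) - s j ≤ ((p : ℤ) - 1) * ((n : ℤ) + 1)) ∧
  (∀ j : Fin t, (p : ℤ) * s (j + 1) - s j =
      ∑ i, (((b i / p ^ (j : ℕ)) % p : ℕ) : ℤ))

open Finset

/-- `cyclicSum p t L j = ∑_{m<t} p^m L_{(j+m) mod t}`: the weight of `L ℓ` is
`p ^ ((ℓ - j) mod t)`. -/
def cyclicWeight (p t j ℓ : ℕ) : ℤ :=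
  if ℓ < j then (p : ℤ) ^ (ℓ + t - j) else (p : ℤ) ^ (ℓ - j)

def cyclicSum (p t : ℕ) (L : ℕ → ℤ) (j : ℕ) : ℤ :=
  ∑ ℓ ∈ range t, cyclicWeight p t j ℓ * L ℓ

section CyclicSum

variable {p t : ℕ}

lemma mul_cyclicWeight_succ_sub {j : ℕ} (hj : j < t) (ℓ : ℕ) :
    p * cyclicWeight p t (j + 1) ℓ - cyclicWeight p t j ℓ =
      if ℓ = j then (p : ℤ) ^ t - 1 else 0 := by
  unfold cyclicWeight
  rcases lt_trichotomy ℓ j with h | rfl | h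
  · rw [if_pos (by omega), if_pos h, if_neg h.ne, ← pow_succ',
      show ℓ + t - (j + 1) + 1 = ℓ + t - j by omega, sub_self]
  · rw [if_pos (by omega), if_neg (lt_irrefl ℓ), if_pos rfl, ← pow_succ',
      show ℓ + t - (ℓ + 1) + 1 = t by omega, Nat.sub_self, pow_zero]
  · rw [if_neg (by omega), if_neg (by omega), if_neg h.ne', ← pow_succ',
      show ℓ - (j + 1) + 1 = ℓ - j by omega, sub_self]

lemma mul_cyclicSum_succ_sub (L : ℕ → ℤ) {j : ℕ} (hj : j < t) :
    p * cyclicSum p t L (j + 1) - cyclicSum p t L j = ((p : ℤ) ^ t - 1) * L j := by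
  simp only [cyclicSum, mul_sum, ← sum_sub_distrib, ← mul_assoc, ← sub_mul,
    mul_cyclicWeight_succ_sub hj, ite_mul, zero_mul, sum_ite_eq', mem_range, if_pos hj]

lemma cyclicSum_self (L : ℕ → ℤ) : cyclicSum p t L t = cyclicSum p t L 0 :=
  sum_congr rfl fun ℓ hℓ => by simp [cyclicWeight, mem_range.mp hℓ]

lemma cyclicSum_zero (L : ℕ → ℤ) : cyclicSum p t L 0 = ∑ ℓ ∈ range t, (p : ℤ) ^ ℓ * L ℓ := by
  simp [cyclicSum, cyclicWeight]

lemma cyclicSum_sum {ι : Type*} (s : Finset ι) (L : ι → ℕ → ℤ) (j : ℕ) :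
    cyclicSum p t (fun ℓ => ∑ i ∈ s, L i ℓ) j = ∑ i ∈ s, cyclicSum p t (L i) j := by
  simp only [cyclicSum, mul_sum]
  exact sum_comm

lemma cyclicSum_eq_sum_range_add_sum_Ico (L : ℕ → ℤ) {j : ℕ} (hj : j ≤ t) :
    cyclicSum p t L j =
      ∑ ℓ ∈ range j, (p : ℤ) ^ (ℓ + t - j) * L ℓ + ∑ ℓ ∈ Ico j t, (p : ℤ) ^ (ℓ - j) * L ℓ := by
  rw [cyclicSum, ← sum_range_add_sum_Ico _ hj]
  congr 1 <;> refine sum_congr rfl fun ℓ hℓ => ?_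
  · rw [cyclicWeight, if_pos (mem_range.mp hℓ)]
  · rw [cyclicWeight, if_neg (mem_Ico.mp hℓ).1.not_gt]

lemma cyclicSum_pos (hp : 0 < p) {L : ℕ → ℤ} (hL : ∀ ℓ < t, 0 ≤ L ℓ)
    (hpos : ∃ ℓ < t, 0 < L ℓ) (j : ℕ) : 0 < cyclicSum p t L j := by
  have hw : ∀ ℓ, 0 < cyclicWeight p t j ℓ := fun ℓ => by
    unfold cyclicWeight; split_ifs <;> positivity
  obtain ⟨ℓ, hℓ, hLℓ⟩ := hpos
  exact sum_pos' (fun k hk => mul_nonneg (hw k).le (hL k (mem_range.mp hk)))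
    ⟨ℓ, mem_range.mpr hℓ, mul_pos (hw ℓ) hLℓ⟩

lemma pow_sub_one_dvd_cyclicSum (L : ℕ → ℤ) (ht : 0 < t)
    (h0 : (p : ℤ) ^ t - 1 ∣ cyclicSum p t L 0) : ∀ j < t, (p : ℤ) ^ t - 1 ∣ cyclicSum p t L j
  | 0, _ => h0
  | j + 1, hj => by
    have hcop : IsCoprime ((p : ℤ) ^ t - 1) p :=
      ⟨-1, (p : ℤ) ^ (t - 1), by rw [← pow_succ, Nat.sub_add_cancel ht]; ring⟩
    refine hcop.dvd_of_dvd_mul_left ?_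
    rw [← sub_add_cancel (p * cyclicSum p t L (j + 1)) (cyclicSum p t L j),
      mul_cyclicSum_succ_sub L (by omega)]
    exact dvd_add (dvd_mul_right _ _) (pow_sub_one_dvd_cyclicSum L ht h0 j (by omega))

end CyclicSum

section CyclicSolution

variable {p t : ℕ} [NeZero t]

open Fin.NatCast in
theorem Fin.eq_zero_of_forall_eq_mul_add_one {R : Type*} [Ring R] [NoZeroDivisors R] {a : R}
    (ha : a ^ t ≠ 1) {x : Fin t → R} (hx : ∀ j, x j = a * x (j + 1)) : x = 0 := by
  have hiter : ∀ j (k : ℕ), x j = a ^ k * x (j + k) := fun j k => by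
    induction k with
    | zero => simp
    | succ k ih => rw [ih, hx (j + k), Nat.cast_succ, ← add_assoc, pow_succ, mul_assoc]
  funext j
  have hj : (1 - a ^ t) * x j = 0 := by
    have h := hiter j t
    rw [Fin.natCast_self, add_zero] at h
    rw [sub_mul, one_mul, ← h, sub_self]
  exact (mul_eq_zero.mp hj).resolve_left (sub_ne_zero.mpr ha.symm)

lemma mul_cyclicSum_add_one_sub (L : ℕ → ℤ) (j : Fin t) :
    p * cyclicSum p t L (j + 1 : Fin t) - cyclicSum p t L j = ((p : ℤ) ^ t - 1) * L j := by
  have h := mul_cyclicSum_succ_sub (p := p) L j.isLt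
  by_cases hj : (j : ℕ) + 1 < t
  · rwa [Fin.val_add_one_of_lt' hj]
  · have hjt : (j : ℕ) + 1 = t := by omega
    have hv : ((j + 1 : Fin t) : ℕ) = 0 := by
      rw [Fin.val_add, Fin.val_one', Nat.add_mod_mod, hjt, Nat.mod_self]
    rwa [hjt, cyclicSum_self, ← hv] at h

lemma pow_sub_one_pos (hp : 1 < p) : 0 < (p : ℤ) ^ t - 1 :=
  sub_pos.mpr (one_lt_pow₀ (by exact_mod_cast hp) (NeZero.ne t))

variable {L : ℕ → ℤ} {s : Fin t → ℤ}

lemma pow_sub_one_mul_eq_cyclicSum (hp : 1 < p)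
    (hs : ∀ j : Fin t, (p : ℤ) * s (j + 1) - s j = L j) (j : Fin t) :
    ((p : ℤ) ^ t - 1) * s j = cyclicSum p t L j := by
  have hpt : (p : ℤ) ^ t ≠ 1 := (sub_pos.mp (pow_sub_one_pos hp)).ne'
  have h := Fin.eq_zero_of_forall_eq_mul_add_one hpt
    (x := fun j => ((p : ℤ) ^ t - 1) * s j - cyclicSum p t L j) fun j => by
      linear_combination -((p : ℤ) ^ t - 1) * hs j + mul_cyclicSum_add_one_sub L j
  exact sub_eq_zero.mp (congrFun h j)

lemma cyclic_solution_unique (hp : 1 < p) {s' : Fin t → ℤ}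
    (hs : ∀ j : Fin t, (p : ℤ) * s (j + 1) - s j = L j)
    (hs' : ∀ j : Fin t, (p : ℤ) * s' (j + 1) - s' j = L j) : s = s' := by
  have hpt := (pow_sub_one_pos (t := t) hp).ne'
  funext j
  exact mul_left_cancel₀ hpt <| (pow_sub_one_mul_eq_cyclicSum hp hs j).trans
    (pow_sub_one_mul_eq_cyclicSum hp hs' j).symm

lemma exists_cyclic_solution (hp : 1 < p) (hdvd : (p : ℤ) ^ t - 1 ∣ cyclicSum p t L 0) :
    ∃ s : Fin t → ℤ, ∀ j : Fin t, (p : ℤ) * s (j + 1) - s j = L j := by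
  have hpt := (pow_sub_one_pos (t := t) hp).ne'
  have hmul : ∀ j : Fin t, ((p : ℤ) ^ t - 1) * (cyclicSum p t L j / ((p : ℤ) ^ t - 1)) =
      cyclicSum p t L j := fun j =>
    Int.mul_ediv_cancel' (pow_sub_one_dvd_cyclicSum L (NeZero.pos t) hdvd j j.isLt)
  refine ⟨fun j => cyclicSum p t L j / ((p : ℤ) ^ t - 1), fun j => mul_left_cancel₀ hpt ?_⟩
  rw [mul_sub, mul_left_comm, hmul, hmul, mul_cyclicSum_add_one_sub]

lemma cyclic_solution_pos (hp : 1 < p) (hs : ∀ j : Fin t, (p : ℤ) * s (j + 1) - s j = L j)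
    (hL : ∀ ℓ < t, 0 ≤ L ℓ) (hpos : ∃ ℓ < t, 0 < L ℓ) (j : Fin t) : 0 < s j := by
  have hpt := pow_sub_one_pos (t := t) hp
  refine pos_of_mul_pos_right ?_ hpt.le
  rw [pow_sub_one_mul_eq_cyclicSum hp hs]
  exact cyclicSum_pos (by omega) hL hpos j

lemma cyclic_solution_bounds (hp : 1 < p) (hs : ∀ j : Fin t, (p : ℤ) * s (j + 1) - s j = L j)
    {M : ℤ} (hL : ∀ ℓ < t, 0 ≤ L ℓ ∧ L ℓ ≤ (p - 1) * M) (hpos : ∃ ℓ < t, 0 < L ℓ)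
    (hlt : ∃ ℓ < t, L ℓ < (p - 1) * M) (j : Fin t) : 0 < s j ∧ s j < M := by
  refine ⟨cyclic_solution_pos hp hs (fun ℓ hℓ => (hL ℓ hℓ).1) hpos j, sub_pos.mp ?_⟩
  refine cyclic_solution_pos (s := fun j => M - s j) (L := fun ℓ => (p - 1) * M - L ℓ) hp
    (fun j => ?_) (fun ℓ hℓ => sub_nonneg.mpr (hL ℓ hℓ).2) (by simpa only [sub_pos] using hlt) j
  linear_combination -hs j

end CyclicSolution

theorem Nat.sum_range_pow_mul_div_pow_mod (p m k : ℕ) :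
    ∑ ℓ ∈ range k, p ^ ℓ * (m / p ^ ℓ % p) = m % p ^ k := by
  induction k with
  | zero => simp [Nat.mod_one]
  | succ k ih => rw [sum_range_succ, ih, Nat.mod_pow_succ]

lemma natCast_mod_le_sub_one {p : ℕ} (hp : 0 < p) (m : ℕ) : ((m % p : ℕ) : ℤ) ≤ p - 1 := by
  have := Nat.mod_lt m hp
  omega

def digitSum {ι : Type*} [Fintype ι] (p : ℕ) (b : ι → ℕ) (ℓ : ℕ) : ℤ :=
  ∑ i, ((b i / p ^ ℓ % p : ℕ) : ℤ)

section DigitSum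

variable {ι : Type*} [Fintype ι] {p t : ℕ} {b : ι → ℕ}

lemma cyclicSum_digitSum_zero (hb : ∀ i, b i < p ^ t) :
    cyclicSum p t (digitSum p b) 0 = ∑ i, (b i : ℤ) := by
  unfold digitSum
  rw [cyclicSum_sum]
  refine sum_congr rfl fun i _ => ?_
  rw [cyclicSum_zero]
  exact_mod_cast (Nat.sum_range_pow_mul_div_pow_mod p (b i) t).trans (Nat.mod_eq_of_lt (hb i))

lemma digitSum_nonneg (ℓ : ℕ) : 0 ≤ digitSum p b ℓ :=
  sum_nonneg fun _ _ => Int.natCast_nonneg _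

lemma digitSum_le (hp : 0 < p) (ℓ : ℕ) : digitSum p b ℓ ≤ (p - 1) * Fintype.card ι :=
  calc digitSum p b ℓ ≤ ∑ _i : ι, ((p : ℤ) - 1) :=
        sum_le_sum fun i _ => natCast_mod_le_sub_one hp _
    _ = (p - 1) * Fintype.card ι := by rw [sum_const, card_univ, nsmul_eq_mul, mul_comm]

lemma exists_digitSum_pos (hb : ∀ i, b i < p ^ t) (hb0 : b ≠ 0) :
    ∃ ℓ < t, 0 < digitSum p b ℓ := by
  obtain ⟨i, hi⟩ := Function.ne_iff.mp hb0
  by_contra! h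
  refine hi ?_
  rw [← Nat.mod_eq_of_lt (hb i), ← Nat.sum_range_pow_mul_div_pow_mod]
  refine sum_eq_zero fun ℓ hℓ => ?_
  have hi0 : ((b i / p ^ ℓ % p : ℕ) : ℤ) ≤ digitSum p b ℓ :=
    single_le_sum (fun j _ => Int.natCast_nonneg _) (mem_univ i)
  have hsum := h ℓ (mem_range.mp hℓ)
  simp only [mul_eq_zero]
  omega

lemma exists_digitSum_lt (hp : 0 < p) (hb : ∀ i, b i < p ^ t) (hbq : b ≠ fun _ => p ^ t - 1) :
    ∃ ℓ < t, digitSum p b ℓ < (p - 1) * Fintype.card ι := by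
  obtain ⟨i, hi⟩ := Function.ne_iff.mp hbq
  suffices ∃ ℓ < t, ((b i / p ^ ℓ % p : ℕ) : ℤ) < p - 1 by
    obtain ⟨ℓ, hℓ, hd⟩ := this
    refine ⟨ℓ, hℓ, ?_⟩
    calc digitSum p b ℓ < ∑ _i : ι, ((p : ℤ) - 1) :=
          sum_lt_sum (fun j _ => natCast_mod_le_sub_one hp _) ⟨i, mem_univ i, hd⟩
      _ = (p - 1) * Fintype.card ι := by rw [sum_const, card_univ, nsmul_eq_mul, mul_comm]
  by_contra! h
  have hdigits : ∀ ℓ ∈ range t, (p : ℤ) ^ ℓ * ((b i / p ^ ℓ % p : ℕ) : ℤ) = p ^ ℓ * (p - 1) :=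
    fun ℓ hℓ => by rw [(natCast_mod_le_sub_one hp _).antisymm (h ℓ (mem_range.mp hℓ))]
  refine hi ?_
  zify [Nat.one_le_pow t p hp]
  rw [← Nat.mod_eq_of_lt (hb i), ← Nat.sum_range_pow_mul_div_pow_mod]
  simp only [Nat.cast_sum, Nat.cast_mul, Nat.cast_pow]
  rw [sum_congr rfl hdigits, ← sum_mul, geom_sum_mul]

end DigitSum

lemma typeCond_iff {p t n : ℕ} [NeZero t] (hp : 1 < p) {b : Fin (n + 1) → ℕ}
    (hb : ∀ i, b i < p ^ t) (hb0 : b ≠ 0) (hbq : b ≠ fun _ => p ^ t - 1) (s : Fin t → ℤ) :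
    TypeCond p t n b s ↔ ∀ j : Fin t, (p : ℤ) * s (j + 1) - s j = digitSum p b j := by
  have hle := digitSum_le (b := b) (by omega : 0 < p)
  have hlt := exists_digitSum_lt (by omega) hb hbq
  simp only [Fintype.card_fin, Nat.cast_add, Nat.cast_one] at hle hlt
  refine ⟨fun h => h.2, fun hs => ⟨fun j => ?_, hs⟩⟩
  obtain ⟨hpos, hltn⟩ := cyclic_solution_bounds hp hs (fun ℓ _ => ⟨digitSum_nonneg ℓ, hle ℓ⟩)
    (exists_digitSum_pos hb hb0) hlt j
  rw [hs j]
  exact ⟨hpos, by omega, digitSum_nonneg j, hle j⟩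

theorem exists_unique_type_general (p t n : ℕ) [Fact p.Prime] [NeZero t]
    (q : ℕ) (hq : q = p ^ t) (b : Fin (n + 1) → ℕ)
    (hb : ∀ i, b i ≤ q - 1) (hb0 : b ≠ 0) (hbq : b ≠ fun _ => q - 1)
    (hdiv : (q - 1) ∣ ∑ i, b i) :
    (∃! s : Fin t → ℤ, TypeCond p t n b s) ∧
    (∀ s : Fin t → ℤ, TypeCond p t n b s → ∀ j : Fin t,
      ((q : ℤ) - 1) * s j =
        ∑ i, ((∑ ℓ ∈ Finset.range (j : ℕ),
                (p : ℤ) ^ (ℓ + t - (j : ℕ)) * (((b i / p ^ ℓ) % p : ℕ) : ℤ)) +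
              (∑ ℓ ∈ Finset.Ico (j : ℕ) t,
                (p : ℤ) ^ (ℓ - (j : ℕ)) * (((b i / p ^ ℓ) % p : ℕ) : ℤ)))) := by
  subst hq
  have hp : 1 < p := (Fact.out : p.Prime).one_lt
  have hpt : 1 ≤ p ^ t := Nat.one_le_pow t p (by omega)
  have hb' : ∀ i, b i < p ^ t := fun i => by have := hb i; omega
  have hsol := typeCond_iff hp hb' hb0 hbq
  have hdvd : (p : ℤ) ^ t - 1 ∣ cyclicSum p t (digitSum p b) 0 := by
    rw [cyclicSum_digitSum_zero hb']
    exact_mod_cast Int.natCast_dvd_natCast.mpr hdiv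
  obtain ⟨s, hs⟩ := exists_cyclic_solution hp hdvd
  refine ⟨⟨s, (hsol s).2 hs, fun s' hs' => cyclic_solution_unique hp ((hsol s').1 hs') hs⟩,
    fun s' hs' j => ?_⟩
  rw [← sum_congr rfl fun i _ => cyclicSum_eq_sum_range_add_sum_Ico _ j.isLt.le,
    ← cyclicSum_sum]
  push_cast
  exact pow_sub_one_mul_eq_cyclicSum hp ((hsol s').1 hs') j

/-- For every nonconstant monomial exponent tuple `(b_0, …, b_n)` with
`0 ≤ b_i ≤ q - 1`, total degree divisible by `q - 1`, and not all `b_i = q - 1`,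
there is a unique `(s_0, …, s_{t-1}) ∈ ℋ` with `λ_j = p s_{j+1} - s_j` for all
`j`; explicitly,
`(q-1) s_j = ∑_i (∑_{ℓ<j} p^{ℓ+t-j} a_{i,ℓ} + ∑_{ℓ=j}^{t-1} p^{ℓ-j} a_{i,ℓ})`. -/
theorem exists_unique_type (p t n : ℕ) [Fact p.Prime] [NeZero t] (hn : 1 ≤ n)
    (q : ℕ) (hq : q = p ^ t) (b : Fin (n + 1) → ℕ)
    (hb : ∀ i, b i ≤ q - 1) (hb0 : b ≠ 0) (hbq : b ≠ fun _ => q - 1)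
    (hdiv : (q - 1) ∣ ∑ i, b i) :
    (∃! s : Fin t → ℤ, TypeCond p t n b s) ∧
    (∀ s : Fin t → ℤ, TypeCond p t n b s → ∀ j : Fin t,
      ((q : ℤ) - 1) * s j =
        ∑ i, ((∑ ℓ ∈ Finset.range (j : ℕ),
                (p : ℤ) ^ (ℓ + t - (j : ℕ)) * (((b i / p ^ ℓ) % p : ℕ) : ℤ)) +
              (∑ ℓ ∈ Finset.Ico (j : ℕ) t,
                (p : ℤ) ^ (ℓ - (j : ℕ)) * (((b i / p ^ ℓ) % p : ℕ) : ℤ)))) :=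
  exists_unique_type_general p t n q hq b hb hb0 hbq hdiv
end

section
/- Let φ: M → N be an injective homomorphism of free modules of finite rank over a discrete valuation ring R with uniformizer p and residue field k, with rank M = m ≥ 1. Define M_i = {x ∈ M : φ(x) ∈ p^i N} and let M̄_i denote the image of M_i in M̄ = M/pM. Then there exists a smallest ℓ with M̄_ℓ = 0, and for 0 ≤ i ≤ ℓ−1, p^i occurs as an invariant factor of φ with multiplicity dim_k(M̄_i / M̄_{i+1}). -/
/-!
Choose bases `b` of `M` and `c` of `N` in which `φ (b t) = p ^ a t • c t` with `a` sorted
(Smith normal form; over a DVR every nonzero diagonal entry is a unit times a power of `p`).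
In these coordinates `M_i = {x | p ^ i ∣ p ^ a t * x_t for all t}`, so under
`M ⧸ pM ≃ (Fin m → k)` its image `M̄_i` is the space of vectors vanishing at the indices `t`
with `a t < i`. Hence `M̄_i ⧸ M̄_{i+1} ≃ k ^ #{t | a t = i}`, and `M̄_i = 0` exactly when
`i > a t` for all `t`.
-/

open Module Submodule

namespace Module.Basis

variable {R M ι : Type*} [CommRing R] [AddCommGroup M] [Module R M]

theorem mem_ideal_smul_top_iff (b : Basis ι R M) (I : Ideal R) (x : M) :
    x ∈ I • (⊤ : Submodule R M) ↔ ∀ i, b.repr x i ∈ I := by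
  rw [← b.span_eq, mem_ideal_smul_span_iff_exists_sum]
  constructor
  · rintro ⟨c, hc, rfl⟩
    rwa [← Finsupp.linearCombination_apply, repr_linearCombination]
  · exact fun h => ⟨b.repr x, h, by rw [← Finsupp.linearCombination_apply, ← repr_symm_apply,
      LinearEquiv.symm_apply_apply]⟩

variable [Fintype ι]

noncomputable def quotIdealSMulTopEquiv (b : Basis ι R M) (I : Ideal R) :
    (M ⧸ I • (⊤ : Submodule R M)) ≃ₗ[R] (ι → R ⧸ I) :=
  let θ : M →ₗ[R] ι → R ⧸ I := LinearMap.pi fun i => I.mkQ ∘ₗ b.coord i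
  have hker : I • ⊤ = LinearMap.ker θ := by
    ext x
    simp [θ, b.mem_ideal_smul_top_iff, funext_iff, Ideal.Quotient.eq_zero_iff_mem]
  have hsurj : Function.Surjective θ := fun f => by
    choose y hy using fun i => I.mkQ_surjective (f i)
    refine ⟨b.equivFun.symm y, funext fun i => ?_⟩
    simp only [θ, LinearMap.pi_apply, LinearMap.comp_apply, coord_apply, ← equivFun_apply,
      LinearEquiv.apply_symm_apply, hy]
  (quotEquivOfEq _ _ hker).trans (θ.quotKerEquivOfSurjective hsurj)

@[simp]
theorem quotIdealSMulTopEquiv_mk (b : Basis ι R M) (I : Ideal R) (x : M) (i : ι) :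
    b.quotIdealSMulTopEquiv I (Submodule.Quotient.mk x) i = Ideal.Quotient.mk I (b.repr x i) :=
  rfl

end Module.Basis

section VanishingBelow

variable (R : Type*) {ι Q X : Type*} [CommRing R] [AddCommGroup Q] [Module R Q]
  [AddCommGroup X] [Module R X]

def vanishingBelow (a : ι → ℕ) (i : ℕ) : Submodule R (ι → Q) :=
  Submodule.pi {t | a t < i} fun _ => ⊥

variable {R}

@[simp]
theorem mem_vanishingBelow {a : ι → ℕ} {i : ℕ} {f : ι → Q} :
    f ∈ vanishingBelow R a i ↔ ∀ t, a t < i → f t = 0 := by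
  simp [vanishingBelow, Submodule.mem_pi]

theorem vanishingBelow_eq_bot {a : ι → ℕ} {i : ℕ} (h : ∀ t, a t < i) :
    vanishingBelow R a i = (⊥ : Submodule R (ι → Q)) :=
  eq_bot_iff.mpr fun _ hf => funext fun t => mem_vanishingBelow.mp hf t (h t)

theorem vanishingBelow_ne_bot [Nontrivial Q] {a : ι → ℕ} {i : ℕ} {t : ι} (h : i ≤ a t) :
    vanishingBelow R a i ≠ (⊥ : Submodule R (ι → Q)) := by
  classical
  obtain ⟨q, hq⟩ := exists_ne (0 : Q)
  refine (Submodule.ne_bot_iff _).mpr ⟨Pi.single t q, ?_, by simpa using hq⟩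
  refine mem_vanishingBelow.mpr fun s hs => ?_
  rw [Pi.single_apply, if_neg]
  rintro rfl
  omega

noncomputable def comapVanishingBelowQuotEquiv (Θ : X →ₗ[R] ι → Q)
    (hΘ : Function.Surjective Θ) (a : ι → ℕ) (i : ℕ) :
    (↥((vanishingBelow R a i).comap Θ) ⧸
        ((vanishingBelow R a (i + 1)).comap Θ).comap ((vanishingBelow R a i).comap Θ).subtype) ≃ₗ[R]
      ({t // a t = i} → Q) :=
  let ψ : ↥((vanishingBelow R a i).comap Θ) →ₗ[R] {t // a t = i} → Q :=
    LinearMap.pi fun t => LinearMap.proj t.1 ∘ₗ Θ ∘ₗ Submodule.subtype _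
  have hker : ((vanishingBelow R a (i + 1)).comap Θ).comap (Submodule.subtype _) =
      LinearMap.ker ψ := by
    ext ⟨x, hx⟩
    simp only [mem_comap, mem_vanishingBelow, Submodule.subtype_apply] at hx ⊢
    simp only [LinearMap.mem_ker, funext_iff, ψ, LinearMap.pi_apply, LinearMap.comp_apply,
      Submodule.subtype_apply, LinearMap.proj_apply, Pi.zero_apply, Subtype.forall]
    refine ⟨fun h t ht => h t (by omega), fun h t ht => ?_⟩
    rcases Nat.lt_succ_iff_lt_or_eq.mp ht with ht | ht
    exacts [hx t ht, h t ht]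
  have hsurj : Function.Surjective ψ := fun g => by
    classical
    obtain ⟨x, hx⟩ := hΘ fun t => if h : a t = i then g ⟨t, h⟩ else 0
    refine ⟨⟨x, mem_vanishingBelow.mpr fun t ht => ?_⟩, funext fun t => ?_⟩
    · simp [hx, ht.ne]
    · simp [ψ, hx, t.2]
  (quotEquivOfEq _ _ hker).trans (ψ.quotKerEquivOfSurjective hsurj)

end VanishingBelow

theorem dvd_of_pow_dvd_pow_mul {α : Type*} [CommMonoidWithZero α] [IsCancelMulZero α]
    {p y : α} {k i : ℕ} (hp : p ≠ 0) (hki : k < i) (h : p ^ i ∣ p ^ k * y) : p ∣ y :=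
  (mul_dvd_mul_iff_left (pow_ne_zero k hp)).mp ((pow_succ p k ▸ pow_dvd_pow p hki).trans h)

section Diagonal

variable {R M N : Type*} [CommRing R] [AddCommGroup M] [Module R M] [AddCommGroup N] [Module R N]
  {m n : ℕ} {b : Basis (Fin m) R M} {c : Basis (Fin n) R N} {φ : M →ₗ[R] N} {hmn : m ≤ n}

theorem LinearMap.toMatrix_eq_of_apply_eq_smul_castLE {d : Fin m → R}
    (hφ : ∀ t, φ (b t) = d t • c (Fin.castLE hmn t)) (j : Fin n) (t : Fin m) :
    LinearMap.toMatrix b c φ j t = if (j : ℕ) = t then d t else 0 := by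
  simp [LinearMap.toMatrix_apply, hφ, Finsupp.single_apply, Fin.ext_iff, eq_comm]

theorem LinearMap.apply_mem_ideal_smul_top_iff_of_apply_eq_smul_castLE {d : Fin m → R}
    (hφ : ∀ t, φ (b t) = d t • c (Fin.castLE hmn t)) (I : Ideal R) (x : M) :
    φ x ∈ I • (⊤ : Submodule R N) ↔ ∀ t, d t * b.repr x t ∈ I := by
  have hrepr : ∀ t, c.repr (φ x) (Fin.castLE hmn t) = d t * b.repr x t := fun t => by
    have hcoord : c.coord (Fin.castLE hmn t) ∘ₗ φ = d t • b.coord t :=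
      b.ext fun s => by rcases eq_or_ne t s with rfl | hts <;> simp [*]
    simpa using LinearMap.congr_fun hcoord x
  have hrepr_zero : ∀ j : Fin n, m ≤ j → c.repr (φ x) j = 0 := fun j hj => by
    have hcoord : c.coord j ∘ₗ φ = 0 :=
      b.ext fun s => by simp [hφ, Finsupp.single_apply, Fin.ext_iff]; omega
    simpa using LinearMap.congr_fun hcoord x
  rw [c.mem_ideal_smul_top_iff]
  refine ⟨fun h t => hrepr t ▸ h (Fin.castLE hmn t), fun h j => ?_⟩
  rcases lt_or_ge (j : ℕ) m with hj | hj
  · rw [show j = Fin.castLE hmn ⟨j, hj⟩ from rfl, hrepr]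
    exact h _
  · rw [hrepr_zero j hj]
    exact I.zero_mem

theorem map_mkQ_comap_ideal_span_pow_smul_top [IsDomain R] {p : R} (hp : p ≠ 0)
    {a : Fin m → ℕ} (hφ : ∀ t, φ (b t) = p ^ a t • c (Fin.castLE hmn t)) (i : ℕ) :
    ((Ideal.span {p ^ i} • ⊤ : Submodule R N).comap φ).map
        (Ideal.span {p} • (⊤ : Submodule R M)).mkQ =
      (vanishingBelow R a i).comap
        (b.quotIdealSMulTopEquiv (Ideal.span {p}) : _ →ₗ[R] Fin m → R ⧸ Ideal.span {p}) := by
  ext z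
  obtain ⟨x, rfl⟩ := mkQ_surjective _ z
  simp only [mem_map, mem_comap, mkQ_apply, LinearEquiv.coe_coe, b.quotIdealSMulTopEquiv_mk,
    mem_vanishingBelow, Ideal.Quotient.eq_zero_iff_mem, Ideal.mem_span_singleton,
    LinearMap.apply_mem_ideal_smul_top_iff_of_apply_eq_smul_castLE hφ, Submodule.Quotient.eq,
    b.mem_ideal_smul_top_iff, map_sub, Finsupp.sub_apply]
  constructor
  · rintro ⟨y, hy, hyx⟩ t ht
    exact (dvd_sub_right (dvd_of_pow_dvd_pow_mul hp ht (hy t))).mp (hyx t)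
  · intro hx
    classical
    refine ⟨b.equivFun.symm fun t => if a t < i then 0 else b.repr x t, fun t => ?_, fun t => ?_⟩
    all_goals
      simp only [← b.equivFun_apply, LinearEquiv.apply_symm_apply]
      split_ifs with ht
    · simp
    · exact dvd_mul_of_dvd_left (pow_dvd_pow p (not_lt.mp ht)) _
    · simpa using hx t ht
    · simp

end Diagonal

section SmithNormalForm

variable {R M N : Type*} [CommRing R] [IsDomain R] [AddCommGroup M] [Module R M]
  [AddCommGroup N] [Module R N] {ι κ : Type*} {φ : M →ₗ[R] N}

theorem LinearMap.exists_basis_apply_eq_smul_of_injective [IsPrincipalIdealRing R] [Finite κ]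
    (bM : Basis ι R M) (bN : Basis κ R N) (hφ : Function.Injective φ) :
    ∃ (b : Basis ι R M) (c : Basis κ R N) (g : ι ↪ κ) (d : ι → R),
      ∀ t, φ (b t) = d t • c (g t) := by
  obtain ⟨n, snf⟩ := (LinearMap.range φ).smithNormalForm bN
  let e := LinearEquiv.ofInjective φ hφ
  let σ : ι ≃ Fin n := (bM.map e).indexEquiv snf.bN
  refine ⟨(snf.bN.map e.symm).reindex σ.symm, snf.bM, σ.toEmbedding.trans snf.f, snf.a ∘ σ,
    fun t => ?_⟩
  rw [Basis.reindex_apply, Equiv.symm_symm, Basis.map_apply,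
    ← LinearEquiv.ofInjective_apply φ (h := hφ), LinearEquiv.apply_symm_apply, snf.snf]
  rfl

theorem LinearMap.exists_basis_apply_eq_pow_smul_of_injective [IsDiscreteValuationRing R]
    [Finite κ] {p : R} (hp : Irreducible p) (bM : Basis ι R M) (bN : Basis κ R N)
    (hφ : Function.Injective φ) :
    ∃ (b : Basis ι R M) (c : Basis κ R N) (g : ι ↪ κ) (a : ι → ℕ),
      ∀ t, φ (b t) = p ^ a t • c (g t) := by
  obtain ⟨b, c, g, d, hd⟩ := exists_basis_apply_eq_smul_of_injective bM bN hφ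
  have hd0 : ∀ t, d t ≠ 0 := fun t h0 => b.ne_zero t (hφ (by rw [hd, h0, zero_smul, map_zero]))
  choose a u hu using fun t => IsDiscreteValuationRing.eq_unit_mul_pow_irreducible (hd0 t) hp
  refine ⟨b.unitsSMul fun t => (u t)⁻¹, c, g, a, fun t => ?_⟩
  rw [Basis.unitsSMul_apply, Units.smul_def, map_smul, hd, hu, smul_smul,
    Units.inv_mul_cancel_left]

theorem LinearMap.exists_basis_apply_eq_pow_smul_castLE_of_injective
    [IsDiscreteValuationRing R] {p : R} (hp : Irreducible p) {m n : ℕ}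
    (bM : Basis (Fin m) R M) (bN : Basis (Fin n) R N) (hφ : Function.Injective φ) :
    ∃ (hmn : m ≤ n) (a : Fin m → ℕ) (b : Basis (Fin m) R M) (c : Basis (Fin n) R N),
      Monotone a ∧ ∀ t, φ (b t) = p ^ a t • c (Fin.castLE hmn t) := by
  obtain ⟨b, c, g, a, h⟩ := exists_basis_apply_eq_pow_smul_of_injective hp bM bN hφ
  have hmn : m ≤ n := Fin.le_of_embedding g
  let σ := Tuple.sort a
  obtain ⟨τ, hτ⟩ := Equiv.Perm.exists_extending_pair (g ∘ σ) (Fin.castLE hmn)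
    (g.injective.comp σ.injective) (Fin.castLE_injective hmn)
  refine ⟨hmn, a ∘ σ, b.reindex σ.symm, c.reindex τ, Tuple.monotone_sort a, fun t => ?_⟩
  rw [Basis.reindex_apply, Basis.reindex_apply, Equiv.symm_symm, h, ← hτ, Equiv.symm_apply_apply]
  rfl

end SmithNormalForm

theorem dvr_filtration_invariant_factors_general
    (R : Type*) [CommRing R] [IsDomain R] [IsDiscreteValuationRing R]
    (p : R) (hp : Irreducible p)
    (M N : Type*) [AddCommGroup M] [Module R M] [AddCommGroup N] [Module R N]
    (m nN : ℕ)
    (bM : Module.Basis (Fin m) R M) (bN : Module.Basis (Fin nN) R N)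
    (φ : M →ₗ[R] N) (hφ : Function.Injective φ) :
    ∀ Mi : ℕ → Submodule R M,
      (∀ i, Mi i = Submodule.comap φ ((Ideal.span {p ^ i} : Ideal R) • (⊤ : Submodule R N))) →
    ∀ Mbar : ℕ → Submodule R (M ⧸ ((Ideal.span {p} : Ideal R) • (⊤ : Submodule R M))),
      (∀ i, Mbar i = (Mi i).map
        (Submodule.mkQ ((Ideal.span {p} : Ideal R) • (⊤ : Submodule R M)))) →
    ∃ ℓ : ℕ, Mbar ℓ = ⊥ ∧ (∀ i < ℓ, Mbar i ≠ ⊥) ∧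
      ∃ (a : Fin m → ℕ), Monotone a ∧
        (∃ (bM' : Module.Basis (Fin m) R M) (bN' : Module.Basis (Fin nN) R N),
          ∀ (i : Fin m) (j : Fin nN),
            LinearMap.toMatrix bM' bN' φ j i =
              if (j : ℕ) = (i : ℕ) then p ^ (a i) else 0) ∧
        ∀ i < ℓ, ∃ d : ℕ,
          Nonempty ((↥(Mbar i) ⧸
              Submodule.comap (Mbar i).subtype (Mbar (i + 1))) ≃ₗ[R]
            (Fin d → R ⧸ (Ideal.span {p} : Ideal R))) ∧
          (Finset.univ.filter (fun j : Fin m => a j = i)).card = d := by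
  intro Mi hMi Mbar hMbar
  obtain ⟨hmn, a, b, c, ha, hbc⟩ :=
    LinearMap.exists_basis_apply_eq_pow_smul_castLE_of_injective hp bM bN hφ
  let Θ := b.quotIdealSMulTopEquiv (Ideal.span {p})
  obtain rfl : Mbar = fun i => (vanishingBelow R a i).comap Θ.toLinearMap :=
    funext fun i => by rw [hMbar, hMi, map_mkQ_comap_ideal_span_pow_smul_top hp.ne_zero hbc]
  dsimp only
  have : Nontrivial (R ⧸ Ideal.span {p}) :=
    Ideal.Quotient.nontrivial_iff.mpr (by simpa [Ideal.span_singleton_eq_top] using hp.not_isUnit)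
  refine ⟨Finset.univ.sup (a · + 1), ?_, fun i hi => ?_, a, ha,
    ⟨b, c, fun t j => LinearMap.toMatrix_eq_of_apply_eq_smul_castLE hbc j t⟩,
    fun i _ => ⟨_, ⟨(comapVanishingBelowQuotEquiv _ Θ.surjective a i).trans
      (LinearEquiv.funCongrLeft R _ (Fintype.equivFinOfCardEq (Fintype.card_subtype _)).symm)⟩,
      rfl⟩⟩
  · rw [vanishingBelow_eq_bot fun t => Finset.le_sup (f := fun t => a t + 1) (Finset.mem_univ t),
      comap_bot, LinearEquiv.ker]
  · obtain ⟨t, -, ht⟩ := Finset.lt_sup_iff.mp hi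
    rw [← LinearEquiv.ker Θ, ← comap_bot]
    exact (comap_injective_of_surjective Θ.surjective).ne
      (vanishingBelow_ne_bot (Nat.lt_succ_iff.mp ht))

/-- Let `φ : M → N` be an injective homomorphism of finite free modules over a
discrete valuation ring `R` with uniformizer `p`, `rank M = m ≥ 1`.
Set `M_i = {x ∈ M : φ(x) ∈ p^i N}` and let `M̄_i` be the image of `M_i` in
`M̄ = M/pM`.  Then there is a smallest `ℓ` with `M̄_ℓ = 0`, there are bases in
which `φ` is in Smith normal form with diagonal entries `p^{a_1} ∣ ⋯ ∣ p^{a_m}`,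
and for `i < ℓ` the multiplicity of `p^i` among the invariant factors equals
`dim_k(M̄_i / M̄_{i+1})` over the residue field `k = R/(p)`. -/
theorem dvr_filtration_invariant_factors
    (R : Type*) [CommRing R] [IsDomain R] [IsDiscreteValuationRing R]
    (p : R) (hp : Irreducible p)
    (M N : Type*) [AddCommGroup M] [Module R M] [AddCommGroup N] [Module R N]
    (m nN : ℕ) (hm : 1 ≤ m)
    (bM : Module.Basis (Fin m) R M) (bN : Module.Basis (Fin nN) R N)
    (φ : M →ₗ[R] N) (hφ : Function.Injective φ) :
    ∀ Mi : ℕ → Submodule R M,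
      (∀ i, Mi i = Submodule.comap φ ((Ideal.span {p ^ i} : Ideal R) • (⊤ : Submodule R N))) →
    ∀ Mbar : ℕ → Submodule R (M ⧸ ((Ideal.span {p} : Ideal R) • (⊤ : Submodule R M))),
      (∀ i, Mbar i = (Mi i).map
        (Submodule.mkQ ((Ideal.span {p} : Ideal R) • (⊤ : Submodule R M)))) →
    ∃ ℓ : ℕ, Mbar ℓ = ⊥ ∧ (∀ i < ℓ, Mbar i ≠ ⊥) ∧
      ∃ (a : Fin m → ℕ), Monotone a ∧
        (∃ (bM' : Module.Basis (Fin m) R M) (bN' : Module.Basis (Fin nN) R N),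
          ∀ (i : Fin m) (j : Fin nN),
            LinearMap.toMatrix bM' bN' φ j i =
              if (j : ℕ) = (i : ℕ) then p ^ (a i) else 0) ∧
        ∀ i < ℓ, ∃ d : ℕ,
          Nonempty ((↥(Mbar i) ⧸
              Submodule.comap (Mbar i).subtype (Mbar (i + 1))) ≃ₗ[R]
            (Fin d → R ⧸ (Ideal.span {p} : Ideal R))) ∧
          (Finset.univ.filter (fun j : Fin m => a j = i)).card = d :=
  dvr_filtration_invariant_factors_general R p hp M N m nN bM bN φ hφ
end
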